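/- Binomial-SYT identity: fix a partition μ and an integer p with p + |μ| ≥ 0, and let a = min{ i ∈ ℕ : p ≥ μ'_i - i } where μ' is the conjugate partition. Define the shape μ^{(p)} by specifying its columns: (μ^{(p)})'_i = μ'_i - 1 for i < a, = p + a - 1 for i = a, and = μ'_{i-1} for i > a. Then (-1)^{a+1} f^{μ^{(p)}} = ∑_{i=0}^{|μ|} (-1)^i C(p+|μ|, p+i) f^{μ/(i)}, with the convention that f^α = 0 when α is not a valid (skew) partition shape. -/

import Mathlib

open MvPolynomial Finset
open scoped Classical

/-- The Schur polynomial in `n` variables indexed by a Young diagram `μ`: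
the sum over all semistandard fillings of the cells of `μ` with values in `Fin n`
(weakly increasing along rows, strictly increasing down columns) of the product
of the corresponding variables. -/
noncomputable def schur (μ : YoungDiagram) (n : ℕ) : MvPolynomial (Fin n) ℚ :=
  ∑ T : μ.cells → Fin n,
    if ((∀ a b : μ.cells, a.1.1 = b.1.1 → a.1.2 ≤ b.1.2 → T a ≤ T b) ∧
        (∀ a b : μ.cells, a.1.2 = b.1.2 → a.1.1 < b.1.1 → T a < T b))
    then ∏ c, MvPolynomial.X (T c) else 0

/-- Chern plethysm `\overline{s}_λ(x_1,…,x_n)`: the Schur polynomial `s_λ` evaluated at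
the `n` quantities `(x_1+⋯+x_n) - x_i`. -/
noncomputable def sbar (μ : YoungDiagram) (n : ℕ) : MvPolynomial (Fin n) ℚ :=
  MvPolynomial.aeval (fun i : Fin n => (∑ j : Fin n, X j) - X i) (schur μ n)

/-- The number of standard fillings of a finite set `s` of cells: bijective fillings by
`0, 1, …, |s|-1` that strictly increase along rows and down columns. -/
noncomputable def sytCountCells (s : Finset (ℕ × ℕ)) : ℕ :=
  Nat.card {T : s → ℕ //
    Function.Injective T ∧ (∀ x, T x < s.card) ∧
    (∀ a b : s, a.1.1 = b.1.1 → a.1.2 < b.1.2 → T a < T b) ∧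
    (∀ a b : s, a.1.2 = b.1.2 → a.1.1 < b.1.1 → T a < T b)}

/-- `f^{λ/μ}`: the number of standard Young tableaux of skew shape `λ/μ`,
with the convention that it is `0` if `μ ⊄ λ`. -/
noncomputable def sytSkew (lam nu : YoungDiagram) : ℕ :=
  if nu ≤ lam then sytCountCells (lam.cells \ nu.cells) else 0

/-- The number of semistandard fillings of a finite set `s` of cells with entries in
`{lo, …, hi}` (weakly increasing along rows, strictly increasing down columns). -/
noncomputable def ssytCountCells (s : Finset (ℕ × ℕ)) (lo hi : ℕ) : ℕ :=
  Nat.card {T : s → ℕ //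
    (∀ x, lo ≤ T x ∧ T x ≤ hi) ∧
    (∀ a b : s, a.1.1 = b.1.1 → a.1.2 ≤ b.1.2 → T a ≤ T b) ∧
    (∀ a b : s, a.1.2 = b.1.2 → a.1.1 < b.1.1 → T a < T b)}

/-- The single-row Young diagram `(k)`. -/
noncomputable def rowD (k : ℕ) : YoungDiagram :=
  YoungDiagram.ofRowLens [k] (List.Pairwise.sortedGE (List.pairwise_singleton _ k))

/-- The single-column Young diagram `(1^k)`. -/
noncomputable def colD (k : ℕ) : YoungDiagram := (rowD k).transpose

/-- The binomial coefficient `C(m, k)` for integer arguments, equal to `0` unless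
`0 ≤ k ≤ m`. -/
def zchoose (m k : ℤ) : ℤ :=
  if 0 ≤ k ∧ k ≤ m then (m.toNat.choose k.toNat : ℤ) else 0

/-!
Aitken's formula writes `f^{λ/σ}` as `|λ/σ|!` times the determinant of
`(1 / (λ'_j - j + k - σ'_k)!)_{j,k}`, where `1 / m! = 0` for `m < 0`. It follows by induction from
the branching rule (remove the cell holding the largest entry): decrementing one `λ'_j` at a time
and summing the determinants gives `|λ/σ|` times the original one, and only corners contribute.

For the identity take `w = (p, μ'_1, μ'_2, …)` and the matrix `(1 / (w_j - j + k)!)_{j,k ≤ |μ|+1}`.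
Its first row is `(1 / (p + k)!)_k`, and deleting it together with column `k` leaves Aitken's
matrix of `μ/(k)`; so the first-row expansion is the alternating binomial sum divided by
`(p + |μ|)!`. Moving the first row down past the next `a - 1` rows gives Aitken's matrix of
`μ^{(p)}`, whence the sign `(-1)^{a-1}`. When `μ^{(p)}` is not a partition, `p = μ'_a - a`, the
first row coincides with row `a`, and both sides vanish.
-/

open Matrix YoungDiagram

noncomputable def invFact (m : ℤ) : ℚ := if 0 ≤ m then ((m.toNat).factorial : ℚ)⁻¹ else 0

lemma invFact_of_neg {m : ℤ} (h : m < 0) : invFact m = 0 := if_neg (by omega)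

lemma invFact_natCast (n : ℕ) : invFact n = ((n.factorial : ℚ))⁻¹ := by simp [invFact]

lemma invFact_sub_one (m : ℤ) : invFact (m - 1) = m * invFact m := by
  rcases lt_trichotomy m 0 with h | rfl | h
  · rw [invFact_of_neg h, invFact_of_neg (by omega), mul_zero]
  · simp [invFact]
  · obtain ⟨n, rfl⟩ : ∃ n : ℕ, m = n + 1 := ⟨(m - 1).toNat, by omega⟩
    rw [add_sub_cancel_right, invFact_natCast, ← Nat.cast_succ, invFact_natCast,
      Nat.factorial_succ]
    push_cast
    field_simp

lemma det_updateRow_eq_sum_mul_adjugate {n : Type*} [Fintype n] [DecidableEq n] {R : Type*}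
    [CommRing R] (M : Matrix n n R) (j : n) (v : n → R) :
    (M.updateRow j v).det = ∑ k, v k * M.adjugate k j := by
  rw [← cramer_transpose_apply, cramer_eq_adjugate_mulVec, mulVec, dotProduct]
  simp [← adjugate_transpose, mul_comm]

/-- `det (M * diagonal d) = det M * ∏ d`, differentiated row by row at `d = 1`. -/
lemma sum_det_updateRow_mul {n : Type*} [Fintype n] [DecidableEq n] {R : Type*} [CommRing R]
    (M : Matrix n n R) (d : n → R) :
    ∑ j, (M.updateRow j fun k => d k * M j k).det = (∑ k, d k) * M.det := by
  have hdiag (k : n) : ∑ j, M j k * M.adjugate k j = M.det := by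
    simpa [mul_apply, mul_comm] using congrFun (congrFun (adjugate_mul M) k) k
  simp_rw [det_updateRow_eq_sum_mul_adjugate, mul_assoc]
  rw [Finset.sum_comm, Finset.sum_mul]
  simp_rw [← Finset.mul_sum, hdiag]

noncomputable def aitkenMatrix (t : ℕ) (l s : ℕ → ℤ) : Matrix (Fin t) (Fin t) ℚ :=
  of fun j k => invFact (l j - j + k - s k)

@[simp]
lemma aitkenMatrix_apply (t : ℕ) (l s : ℕ → ℤ) (j k : Fin t) :
    aitkenMatrix t l s j k = invFact (l j - j + k - s k) := rfl

lemma det_aitkenMatrix_self {t : ℕ} {l : ℕ → ℤ} (hl : Antitone l) :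
    (aitkenMatrix t l l).det = 1 := by
  have htri : (aitkenMatrix t l l).BlockTriangular id := by
    intro j k hkj
    have : l j ≤ l k := hl (le_of_lt hkj)
    have : (k : ℕ) < j := hkj
    exact invFact_of_neg (by omega)
  rw [det_of_isUpperTriangular htri]
  simp [invFact]

lemma det_aitkenMatrix_eq_zero {t : ℕ} {l s : ℕ → ℤ} (hl : Antitone l) (hs : Antitone s)
    (k₀ : Fin t) (h : l k₀ < s k₀) : (aitkenMatrix t l s).det = 0 := by
  rw [det_apply]
  refine Finset.sum_eq_zero fun σ _ => ?_
  -- pigeonhole: `σ` cannot map the `k₀ + 1` columns `≤ k₀` into the `k₀` rows `< k₀`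
  obtain ⟨i, hi, hσi⟩ : ∃ i ≤ k₀, k₀ ≤ σ i := by
    by_contra! hlt
    have := Finset.card_le_card_of_injOn (s := Finset.Iic k₀) (t := Finset.Iio k₀) σ
      (fun i hi => by simpa using hlt i (by simpa using hi)) σ.injective.injOn
    simp at this
  have : l (σ i) ≤ l k₀ := hl hσi
  have : s k₀ ≤ s i := hs hi
  have : (i : ℕ) ≤ k₀ := hi
  have : (k₀ : ℕ) ≤ σ i := hσi
  rw [Finset.prod_eq_zero (Finset.mem_univ i) (invFact_of_neg (by omega)), smul_zero]

lemma sum_det_aitkenMatrix_update (t : ℕ) (l s : ℕ → ℤ) :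
    ∑ j : Fin t, (aitkenMatrix t (Function.update l j (l j - 1)) s).det =
      (∑ j : Fin t, ((l j : ℚ) - s j)) * (aitkenMatrix t l s).det := by
  set A := aitkenMatrix t l s
  have hrow (j : Fin t) : aitkenMatrix t (Function.update l j (l j - 1)) s =
      A.updateRow j (((l j : ℚ) - j) • A j + fun k : Fin t => (((k : ℕ) : ℚ) - s k) * A j k) := by
    ext j' k
    by_cases hj : j' = j
    · subst hj
      have : l j' - 1 - j' + k - s k = (l j' - j' + k - s k) - 1 := by ring
      simp only [aitkenMatrix_apply, Function.update_self, this, invFact_sub_one, updateRow_self,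
        Pi.add_apply, Pi.smul_apply, smul_eq_mul, A]
      push_cast
      ring
    · have : (j' : ℕ) ≠ j := fun h => hj (Fin.ext h)
      simp [A, hj, this]
  simp_rw [hrow, det_updateRow_add, det_updateRow_smul, updateRow_eq_self]
  rw [Finset.sum_add_distrib, ← Finset.sum_mul, sum_det_updateRow_mul, ← add_mul]
  congr 1
  simp only [Finset.sum_sub_distrib]
  ring

lemma det_aitkenMatrix_update_eq_zero {t : ℕ} {l s : ℕ → ℤ} (hs : ∀ k, 0 ≤ s k) (ht : l t = 0)
    (j : Fin t) (hj : l (j + 1) = l j) :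
    (aitkenMatrix t (Function.update l j (l j - 1)) s).det = 0 := by
  by_cases hjt : (j : ℕ) + 1 < t
  · -- the decremented row `j` coincides with row `j + 1`
    have hne : j ≠ ⟨j + 1, hjt⟩ := by simp [Fin.ext_iff]
    refine det_zero_of_row_eq hne (funext fun k => ?_)
    simp only [aitkenMatrix_apply, Function.update_self, ne_eq, Nat.succ_ne_self,
      not_false_eq_true, Function.update_of_ne, hj]
    congr 1
    push_cast
    ring
  · have hlj : l j = 0 := by rw [← hj, show (j : ℕ) + 1 = t by omega, ht]
    refine det_eq_zero_of_row_eq_zero j fun k => invFact_of_neg ?_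
    have := hs k
    have : (k : ℕ) ≤ j := by omega
    simp only [Function.update_self, hlj]
    omega

namespace YoungDiagram

lemma colLen_eq_of_mem_iff {μ : YoungDiagram} {j c : ℕ} (h : ∀ i, (i, j) ∈ μ ↔ i < c) :
    μ.colLen j = c :=
  eq_of_forall_lt_iff fun i => by rw [← mem_iff_lt_colLen, h]

lemma colLen_le_colLen_of_le {μ ν : YoungDiagram} (h : μ ≤ ν) (j : ℕ) :
    μ.colLen j ≤ ν.colLen j :=
  le_of_forall_lt fun _ hi => mem_iff_lt_colLen.mp (h (mem_iff_lt_colLen.mpr hi))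

lemma antitone_colLen (μ : YoungDiagram) : Antitone fun j => (μ.colLen j : ℤ) :=
  fun _ _ h => Int.ofNat_le.mpr (μ.colLen_anti _ _ h)

@[simp]
lemma colLen_bot (j : ℕ) : (⊥ : YoungDiagram).colLen j = 0 :=
  colLen_eq_of_mem_iff fun i => by simp [notMem_bot]

lemma colLen_eq_zero_of_rowLen_le {μ : YoungDiagram} {j : ℕ} (h : μ.rowLen 0 ≤ j) :
    μ.colLen j = 0 := by
  by_contra hj
  have := mem_iff_lt_rowLen.mp (mem_iff_lt_colLen.mpr (Nat.pos_of_ne_zero hj) : (0, j) ∈ μ)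
  omega

lemma rowLen_zero_le_card (μ : YoungDiagram) : μ.rowLen 0 ≤ μ.card := by
  rw [rowLen_eq_card]
  exact Finset.card_le_card (Finset.filter_subset _ _)

lemma card_eq_sum_colLen (μ : YoungDiagram) {t : ℕ} (ht : μ.colLen t = 0) :
    μ.card = ∑ j ∈ Finset.range t, μ.colLen j := by
  have hmaps : ∀ c ∈ μ.cells, c.2 ∈ Finset.range t := fun c hc => by
    have := mem_iff_lt_colLen.mp (show (c.1, c.2) ∈ μ from hc)
    have := μ.colLen_anti t c.2
    rw [Finset.mem_range]
    by_contra
    omega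
  rw [YoungDiagram.card, Finset.card_eq_sum_card_fiberwise hmaps]
  refine Finset.sum_congr rfl fun j _ => ?_
  rw [colLen_eq_card]
  rfl

lemma exists_colLen_eq {f : ℕ → ℕ} (hf : Antitone f) {N : ℕ} (hN : f N = 0) :
    ∃ ν : YoungDiagram, ∀ j, ν.colLen j = f j := by
  have hsorted : ((List.range N).map f).SortedGE :=
    List.Pairwise.sortedGE (List.Pairwise.map _ (fun _ _ h => hf h.le) List.pairwise_lt_range)
  refine ⟨(ofRowLens _ hsorted).transpose, fun j => ?_⟩
  rw [colLen_transpose]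
  rcases lt_or_ge j N with hj | hj
  · exact (rowLen_ofRowLens (w := (List.range N).map f) ⟨j, by simpa using hj⟩).trans
      (by simp)
  · have : f j = 0 := Nat.eq_zero_of_le_zero (hN ▸ hf hj)
    rw [this]
    by_contra h
    have := mem_ofRowLens.mp (mem_iff_lt_rowLen.mpr (Nat.pos_of_ne_zero h) : (j, 0) ∈ _)
    simp at this
    omega

def corner (μ : YoungDiagram) (j : ℕ) : ℕ × ℕ := (μ.colLen j - 1, j)

lemma corner_mem {μ : YoungDiagram} {j : ℕ} (h : 0 < μ.colLen j) : μ.corner j ∈ μ :=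
  mem_iff_lt_colLen.mpr (Nat.sub_lt h one_pos)

def eraseCorner (μ : YoungDiagram) (j : ℕ) (hj : μ.colLen (j + 1) < μ.colLen j) :
    YoungDiagram where
  cells := μ.cells.erase (μ.corner j)
  isLowerSet := by
    rintro ⟨x₁, x₂⟩ ⟨y₁, y₂⟩ ⟨h₁, h₂⟩ hx
    simp only [Finset.coe_erase, Set.mem_sdiff, Finset.mem_coe, mem_cells,
      Set.mem_singleton_iff, corner] at hx ⊢
    obtain ⟨hx, hne⟩ := hx
    refine ⟨μ.up_left_mem h₁ h₂ hx, ?_⟩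
    intro hy
    obtain ⟨rfl, rfl⟩ := Prod.mk.inj hy
    dsimp only at h₁ h₂
    have hx₁ := mem_iff_lt_colLen.mp (μ.up_left_mem le_rfl h₂ hx)
    rcases h₂.lt_or_eq with h₂ | rfl
    · have := mem_iff_lt_colLen.mp (μ.up_left_mem le_rfl (by omega : y₂ + 1 ≤ x₂) hx)
      omega
    · exact hne (Prod.ext (by omega) rfl)

variable {μ : YoungDiagram} {j : ℕ} (hj : μ.colLen (j + 1) < μ.colLen j)
include hj

lemma eraseCorner_le : μ.eraseCorner j hj ≤ μ := fun _ hx => (Finset.mem_erase.mp hx).2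

lemma card_eraseCorner : (μ.eraseCorner j hj).card + 1 = μ.card :=
  Finset.card_erase_add_one (corner_mem (by omega))

lemma colLen_eraseCorner (j' : ℕ) :
    ((μ.eraseCorner j hj).colLen j' : ℤ) = Function.update (fun i => (μ.colLen i : ℤ)) j
      (μ.colLen j - 1) j' := by
  have hmem (i : ℕ) : (i, j') ∈ μ.eraseCorner j hj ↔ (i, j') ∈ μ ∧ (i, j') ≠ μ.corner j :=
    Finset.mem_erase.trans and_comm
  by_cases h : j' = j
  · subst h
    rw [colLen_eq_of_mem_iff (c := μ.colLen j' - 1) fun i => by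
      simp only [hmem, mem_iff_lt_colLen, corner, ne_eq, Prod.mk.injEq, and_true]; omega]
    simp only [Function.update_self]
    omega
  · rw [colLen_eq_of_mem_iff (c := μ.colLen j') fun i => by
      simp only [hmem, mem_iff_lt_colLen, corner, ne_eq, Prod.mk.injEq]; omega]
    simp [h]

lemma colLen_update_eq_eraseCorner :
    Function.update (fun i => (μ.colLen i : ℤ)) j (μ.colLen j - 1) =
      fun i => ((μ.eraseCorner j hj).colLen i : ℤ) :=
  funext fun i => (colLen_eraseCorner hj i).symm

end YoungDiagram

section StdFilling

variable {s : Finset (ℕ × ℕ)}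

def IsStdFilling (s : Finset (ℕ × ℕ)) (T : s → ℕ) : Prop :=
  Function.Injective T ∧ (∀ x, T x < s.card) ∧
    (∀ a b : s, a.1.1 = b.1.1 → a.1.2 < b.1.2 → T a < T b) ∧
    (∀ a b : s, a.1.2 = b.1.2 → a.1.1 < b.1.1 → T a < T b)

lemma sytCountCells_eq_card (s : Finset (ℕ × ℕ)) :
    sytCountCells s = Nat.card {T // IsStdFilling s T} := rfl

instance (s : Finset (ℕ × ℕ)) : Finite {T // IsStdFilling s T} :=
  Finite.of_injective (fun T x => (⟨T.1 x, T.2.2.1 x⟩ : Fin s.card)) fun _ _ h =>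
    Subtype.ext (funext fun x => congrArg Fin.val (congrFun h x))

lemma IsStdFilling.exists_eq {T : s → ℕ} (hT : IsStdFilling s T) {k : ℕ} (hk : k < s.card) :
    ∃ x, T x = k := by
  have hbij := (Fintype.bijective_iff_injective_and_card
    (fun x => (⟨T x, hT.2.1 x⟩ : Fin s.card))).mpr
      ⟨fun x y h => hT.1 (congrArg Fin.val h), by simp⟩
  obtain ⟨x, hx⟩ := hbij.2 ⟨k, hk⟩
  exact ⟨x, congrArg Fin.val hx⟩

lemma sytCountCells_eq_sum_card_eq_top (hs : s.Nonempty) :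
    sytCountCells s =
      ∑ c : s, Nat.card {T : {T // IsStdFilling s T} // T.1 c = s.card - 1} := by
  have hk : s.card - 1 < s.card := Nat.sub_lt hs.card_pos one_pos
  choose top htop using fun T : {T // IsStdFilling s T} => T.2.exists_eq hk
  have htop_iff (T : {T // IsStdFilling s T}) (c : s) : T.1 c = s.card - 1 ↔ top T = c :=
    ⟨fun h => T.2.1 ((htop T).trans h.symm), fun h => h ▸ htop T⟩
  rw [sytCountCells_eq_card, ← Nat.card_congr (Equiv.sigmaFiberEquiv top), Nat.card_sigma]
  exact Finset.sum_congr rfl fun c _ =>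
    Nat.card_congr (Equiv.subtypeEquivRight fun T => (htop_iff T c).symm)

def IsOuterCell (s : Finset (ℕ × ℕ)) (c : ℕ × ℕ) : Prop :=
  ∀ d ∈ s, (d.1 = c.1 → d.2 ≤ c.2) ∧ (d.2 = c.2 → d.1 ≤ c.1)

def extendFilling (c : ℕ × ℕ) (T : s.erase c → ℕ) (x : s) : ℕ :=
  if h : x.1 = c then s.card - 1 else T ⟨x.1, Finset.mem_erase.mpr ⟨h, x.2⟩⟩

lemma extendFilling_lt_extendFilling {c : ℕ × ℕ} {T : s.erase c → ℕ}
    (hT : ∀ y, T y < s.card - 1) (P Q : ℕ × ℕ → ℕ × ℕ → Prop) (hPQ : ∀ d ∈ s, P c d → ¬ Q c d)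
    (hTPQ : ∀ a b : s.erase c, P a b → Q a b → T a < T b) (a b : s) (hP : P a b) (hQ : Q a b) :
    extendFilling c T a < extendFilling c T b := by
  by_cases ha : a.1 = c
  · exact absurd (ha ▸ hQ) (hPQ b b.2 (ha ▸ hP))
  by_cases hb : b.1 = c
  · simpa [extendFilling, ha, hb] using hT _
  · simpa [extendFilling, ha, hb] using hTPQ _ _ hP hQ

lemma IsStdFilling.extendFilling {c : ℕ × ℕ} (hc : c ∈ s) (hout : IsOuterCell s c)
    {T : s.erase c → ℕ} (hT : IsStdFilling (s.erase c) T) :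
    IsStdFilling s (extendFilling c T) := by
  obtain ⟨hinj, hlt, hrow, hcol⟩ := hT
  have hlt' (y : s.erase c) : T y < s.card - 1 := Finset.card_erase_of_mem hc ▸ hlt y
  refine ⟨fun a b hab => ?_, fun x => ?_,
    extendFilling_lt_extendFilling hlt' (fun a b => a.1 = b.1) (fun a b => a.2 < b.2)
      (fun d hd h => not_lt.mpr ((hout d hd).1 h.symm)) hrow,
    extendFilling_lt_extendFilling hlt' (fun a b => a.2 = b.2) (fun a b => a.1 < b.1)
      (fun d hd h => not_lt.mpr ((hout d hd).2 h.symm)) hcol⟩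
  · by_cases ha : a.1 = c <;> by_cases hb : b.1 = c
    · exact Subtype.ext (ha.trans hb.symm)
    · have := hlt' ⟨b, Finset.mem_erase.mpr ⟨hb, b.2⟩⟩
      simp only [_root_.extendFilling, ha, hb, dite_true, dite_false] at hab
      omega
    · have := hlt' ⟨a, Finset.mem_erase.mpr ⟨ha, a.2⟩⟩
      simp only [_root_.extendFilling, ha, hb, dite_true, dite_false] at hab
      omega
    · simp only [_root_.extendFilling, ha, hb, dite_false] at hab
      exact Subtype.ext (by simpa using congrArg Subtype.val (hinj hab))
  · have hs : 0 < s.card := Finset.card_pos.mpr ⟨x, x.2⟩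
    by_cases hx : x.1 = c
    · simp only [_root_.extendFilling, hx, dite_true]
      omega
    · simpa [_root_.extendFilling, hx] using (hlt' _).trans_le (Nat.sub_le _ 1)

lemma IsStdFilling.restrict {T : s → ℕ} (hT : IsStdFilling s T) {c : ℕ × ℕ} (hc : c ∈ s)
    (htop : T ⟨c, hc⟩ = s.card - 1) :
    IsStdFilling (s.erase c) fun y => T ⟨y.1, Finset.mem_of_mem_erase y.2⟩ := by
  obtain ⟨hinj, hlt, hrow, hcol⟩ := hT
  refine ⟨fun a b hab => Subtype.ext (by simpa using congrArg Subtype.val (hinj hab)),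
    fun y => ?_, fun a b h₁ h₂ => hrow _ _ h₁ h₂, fun a b h₁ h₂ => hcol _ _ h₁ h₂⟩
  have hne : T ⟨y.1, Finset.mem_of_mem_erase y.2⟩ ≠ T ⟨c, hc⟩ := fun h =>
    (Finset.mem_erase.mp y.2).1 (congrArg Subtype.val (hinj h))
  have := hlt ⟨y.1, Finset.mem_of_mem_erase y.2⟩
  rw [Finset.card_erase_of_mem hc]
  dsimp only
  omega

def stdFillingEquivErase {c : ℕ × ℕ} (hc : c ∈ s) (hout : IsOuterCell s c) :
    {T : {T // IsStdFilling s T} // T.1 ⟨c, hc⟩ = s.card - 1} ≃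
      {T // IsStdFilling (s.erase c) T} where
  toFun T := ⟨_, T.1.2.restrict hc T.2⟩
  invFun T := ⟨⟨_, T.2.extendFilling hc hout⟩, by simp [extendFilling]⟩
  left_inv T := by
    ext x
    by_cases hx : x.1 = c
    · simp only [extendFilling, hx, dite_true]
      exact (congrArg T.1.1 (Subtype.ext hx)).trans T.2 |>.symm
    · simp [extendFilling, hx]
  right_inv T := by
    ext y
    simp [extendFilling, (Finset.mem_erase.mp y.2).1]

lemma isEmpty_of_not_isOuterCell {c : ℕ × ℕ} (hc : c ∈ s) (hout : ¬ IsOuterCell s c) :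
    IsEmpty {T : {T // IsStdFilling s T} // T.1 ⟨c, hc⟩ = s.card - 1} := by
  refine ⟨fun ⟨⟨T, _, hlt, hrow, hcol⟩, htop⟩ => ?_⟩
  simp only [IsOuterCell, not_forall, not_and_or, not_le] at hout
  dsimp only at htop
  obtain ⟨d, hd, ⟨h₁, h₂⟩ | ⟨h₁, h₂⟩⟩ := hout
  · have := hrow ⟨c, hc⟩ ⟨d, hd⟩ h₁.symm h₂
    have := hlt ⟨d, hd⟩
    omega
  · have := hcol ⟨c, hc⟩ ⟨d, hd⟩ h₁.symm h₂
    have := hlt ⟨d, hd⟩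
    omega

theorem sytCountCells_eq_sum_erase (hs : s.Nonempty) :
    sytCountCells s = ∑ c ∈ s with IsOuterCell s c, sytCountCells (s.erase c) := by
  rw [sytCountCells_eq_sum_card_eq_top hs, Finset.sum_filter, ← Finset.sum_coe_sort s]
  refine Finset.sum_congr rfl fun c _ => ?_
  split_ifs with hout
  · exact Nat.card_congr (stdFillingEquivErase c.2 hout)
  · have := isEmpty_of_not_isOuterCell c.2 hout
    exact Nat.card_of_isEmpty

lemma sytCountCells_empty : sytCountCells ∅ = 1 :=
  Nat.card_eq_one_iff_unique.mpr
    ⟨⟨fun _ _ => Subtype.ext (funext fun x => absurd x.2 (Finset.notMem_empty _))⟩,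
      ⟨⟨fun _ => 0, by simp [Function.Injective]⟩⟩⟩

end StdFilling

namespace YoungDiagram

variable {lam sig : YoungDiagram}

lemma isOuterCell_sdiff_iff {c : ℕ × ℕ} (hc : c ∈ lam.cells \ sig.cells) :
    IsOuterCell (lam.cells \ sig.cells) c ↔
      lam.colLen (c.2 + 1) < lam.colLen c.2 ∧ c = lam.corner c.2 := by
  obtain ⟨r, j⟩ := c
  show _ ↔ lam.colLen (j + 1) < lam.colLen j ∧ (r, j) = lam.corner j
  simp only [Finset.mem_sdiff, mem_cells] at hc
  have hr := mem_iff_lt_colLen.mp hc.1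
  have hout {d : ℕ × ℕ} (hd : d ∈ lam) (hrd : r ≤ d.1) (hjd : j ≤ d.2) :
      d ∈ lam.cells \ sig.cells :=
    Finset.mem_sdiff.mpr ⟨hd, fun hds => hc.2 (sig.up_left_mem hrd hjd hds)⟩
  constructor
  · intro h
    have hbelow : ¬ r + 1 < lam.colLen j := fun hlt => by
      have := (h _ (hout (mem_iff_lt_colLen.mpr hlt) (by simp) le_rfl)).2 rfl
      simp at this
    have hright : ¬ r < lam.colLen (j + 1) := fun hlt => by
      have := (h _ (hout (mem_iff_lt_colLen.mpr hlt) le_rfl (by simp))).1 rfl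
      simp at this
    exact ⟨by omega, Prod.ext (by simp [corner]; omega) rfl⟩
  · rintro ⟨hj, hrc⟩
    simp only [corner, Prod.mk.injEq] at hrc
    rintro ⟨d₁, d₂⟩ hd
    have hd := mem_iff_lt_colLen.mp (Finset.mem_sdiff.mp hd).1
    refine ⟨fun (hd₁ : d₁ = r) => ?_, fun (hd₂ : d₂ = j) => ?_⟩
    · by_contra! hlt
      have := mem_iff_lt_colLen.mp (lam.up_left_mem (i2 := d₁) (j2 := d₂) hd₁.symm.le
        (show j + 1 ≤ d₂ by omega) (mem_iff_lt_colLen.mpr hd))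
      omega
    · subst hd₂
      show d₁ ≤ r
      omega

lemma sum_isOuterCell_sdiff {M : Type*} [AddCommMonoid M] {t : ℕ}
    (ht : lam.colLen t = 0) (f : ℕ × ℕ → M) :
    ∑ c ∈ lam.cells \ sig.cells with IsOuterCell (lam.cells \ sig.cells) c, f c =
      ∑ j : Fin t, if lam.colLen (j + 1) < lam.colLen j ∧ sig.colLen j < lam.colLen j
        then f (lam.corner j) else 0 := by
  rw [← Finset.sum_filter]
  have himage : {c ∈ lam.cells \ sig.cells | IsOuterCell (lam.cells \ sig.cells) c} =
      (Finset.univ.filter fun j : Fin t =>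
        lam.colLen (j + 1) < lam.colLen j ∧ sig.colLen j < lam.colLen j).image
          fun j : Fin t => lam.corner j := by
    ext c
    simp only [Finset.mem_filter, Finset.mem_image, Finset.mem_univ, true_and]
    constructor
    · rintro ⟨hc, hout⟩
      obtain ⟨hj, hcc⟩ := (isOuterCell_sdiff_iff hc).mp hout
      have := lam.colLen_anti t c.2
      have hc₁ : c.1 = lam.colLen c.2 - 1 := congrArg Prod.fst hcc
      simp only [Finset.mem_sdiff, mem_cells] at hc
      have := mem_iff_lt_colLen.mp (show (c.1, c.2) ∈ lam from hc.1)
      have := mt mem_iff_lt_colLen.mpr (show (c.1, c.2) ∉ sig from hc.2)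
      exact ⟨⟨c.2, by by_contra; omega⟩,
        ⟨hj, show sig.colLen c.2 < lam.colLen c.2 by omega⟩, hcc.symm⟩
    · rintro ⟨j, ⟨hj, hsj⟩, rfl⟩
      have hc : lam.corner j ∈ lam.cells \ sig.cells := by
        simp only [Finset.mem_sdiff, mem_cells, corner, mem_iff_lt_colLen]
        omega
      exact ⟨hc, (isOuterCell_sdiff_iff hc).mpr ⟨hj, rfl⟩⟩
  rw [himage, Finset.sum_image fun j _ k _ h => Fin.ext (congrArg Prod.snd h)]

lemma sum_colLen_sub_colLen (hle : sig ≤ lam) {t : ℕ} (ht : lam.colLen t = 0) :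
    ∑ j : Fin t, ((lam.colLen j : ℚ) - sig.colLen j) = (lam.card : ℚ) - sig.card := by
  have hsig : sig.colLen t = 0 := Nat.eq_zero_of_le_zero (ht ▸ colLen_le_colLen_of_le hle t)
  rw [Finset.sum_sub_distrib, lam.card_eq_sum_colLen ht, sig.card_eq_sum_colLen hsig]
  simp [Fin.sum_univ_eq_sum_range (fun j => (lam.colLen j : ℚ)),
    Fin.sum_univ_eq_sum_range (fun j => (sig.colLen j : ℚ))]

lemma le_eraseCorner {j : ℕ} (hj : lam.colLen (j + 1) < lam.colLen j) (hle : sig ≤ lam)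
    (hsj : sig.colLen j < lam.colLen j) : sig ≤ lam.eraseCorner j hj := fun c hc =>
  Finset.mem_erase.mpr ⟨by rintro rfl; have := mem_iff_lt_colLen.mp hc; omega, hle hc⟩

end YoungDiagram

lemma det_aitkenMatrix_update_colLen_eq_zero {lam sig : YoungDiagram} (hle : sig ≤ lam) {t : ℕ}
    (ht : lam.colLen t = 0) (j : Fin t)
    (hj : ¬ (lam.colLen (j + 1) < lam.colLen j ∧ sig.colLen j < lam.colLen j)) :
    (aitkenMatrix t (Function.update (fun j => (lam.colLen j : ℤ)) j (lam.colLen j - 1))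
      fun j => (sig.colLen j : ℤ)).det = 0 := by
  by_cases hcorner : lam.colLen (j + 1) < lam.colLen j
  · have := colLen_le_colLen_of_le hle j
    have := colLen_eraseCorner hcorner j
    rw [colLen_update_eq_eraseCorner hcorner,
      det_aitkenMatrix_eq_zero (antitone_colLen _) (antitone_colLen _) j]
    simp only [Function.update_self] at this
    omega
  · have : (lam.colLen (j + 1) : ℤ) = lam.colLen j := by
      have := lam.colLen_anti j (j + 1) (Nat.le_succ _)
      omega
    exact det_aitkenMatrix_update_eq_zero (fun k => Int.natCast_nonneg _) (by simp [ht]) j this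

/-- Aitken's determinant formula, in terms of column lengths. -/
theorem sytCountCells_sdiff_eq_factorial_mul_det {lam sig : YoungDiagram} (hle : sig ≤ lam)
    {t : ℕ} (ht : lam.colLen t = 0) :
    (sytCountCells (lam.cells \ sig.cells) : ℚ) = ((lam.card - sig.card).factorial : ℚ) *
      (aitkenMatrix t (fun j => (lam.colLen j : ℤ)) fun j => (sig.colLen j : ℤ)).det := by
  induction hm : lam.card - sig.card generalizing lam with
  | zero =>
    obtain rfl : lam = sig := YoungDiagram.ext (Finset.eq_of_subset_of_card_le
      (cells_subset_iff.mpr hle) (by simp only [YoungDiagram.card] at hm; omega)).symm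
    simp [sytCountCells_empty, det_aitkenMatrix_self (antitone_colLen _)]
  | succ m ih =>
    have hcard : sig.card ≤ lam.card := Finset.card_le_card hle
    have hs : (lam.cells \ sig.cells).Nonempty := by
      rw [← Finset.card_pos, Finset.card_sdiff_of_subset hle]
      simp only [YoungDiagram.card] at hm hcard
      omega
    have hterm (j : Fin t) :
        ((if lam.colLen (j + 1) < lam.colLen j ∧ sig.colLen j < lam.colLen j
          then sytCountCells ((lam.cells \ sig.cells).erase (lam.corner j)) else 0 : ℕ) : ℚ) =
        m.factorial * (aitkenMatrix t (Function.update (fun j => (lam.colLen j : ℤ)) j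
          (lam.colLen j - 1)) fun j => (sig.colLen j : ℤ)).det := by
      split_ifs with h
      · obtain ⟨hj, hsj⟩ := h
        have ht' : (lam.eraseCorner j hj).colLen t = 0 :=
          Nat.eq_zero_of_le_zero (ht ▸ colLen_le_colLen_of_le (eraseCorner_le hj) t)
        have hcard' := card_eraseCorner hj
        rw [show (lam.cells \ sig.cells).erase (lam.corner j) =
            (lam.eraseCorner j hj).cells \ sig.cells from (Finset.erase_sdiff_comm _ _ _).symm,
          ih (le_eraseCorner hj hle hsj) ht' (by omega), colLen_update_eq_eraseCorner hj]
      · rw [Nat.cast_zero, det_aitkenMatrix_update_colLen_eq_zero hle ht j h, mul_zero]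
    rw [sytCountCells_eq_sum_erase hs, sum_isOuterCell_sdiff ht, Nat.cast_sum]
    simp_rw [hterm]
    rw [← Finset.mul_sum, sum_det_aitkenMatrix_update]
    push_cast
    rw [sum_colLen_sub_colLen hle ht, ← Nat.cast_sub hcard, hm, Nat.factorial_succ]
    push_cast
    ring

lemma mem_rowD {k : ℕ} {c : ℕ × ℕ} : c ∈ rowD k ↔ c.1 = 0 ∧ c.2 < k := by
  obtain ⟨c₁, c₂⟩ := c
  simp only [rowD, mem_ofRowLens, List.length_singleton, Nat.lt_one_iff]
  constructor
  · rintro ⟨rfl, h⟩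
    simpa using h
  · rintro ⟨rfl, h⟩
    exact ⟨rfl, by simpa using h⟩

lemma colLen_rowD (k j : ℕ) : (rowD k).colLen j = if j < k then 1 else 0 :=
  colLen_eq_of_mem_iff fun i => by split_ifs <;> simp [mem_rowD, *]

lemma rowD_le_iff {k : ℕ} {μ : YoungDiagram} : rowD k ≤ μ ↔ k ≤ μ.rowLen 0 := by
  refine ⟨fun h => ?_, fun h c hc => ?_⟩
  · rcases Nat.eq_zero_or_pos k with rfl | hk
    · exact Nat.zero_le _
    · have := mem_iff_lt_rowLen.mp (h (mem_rowD.mpr ⟨rfl, Nat.sub_lt hk one_pos⟩ :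
        (0, k - 1) ∈ rowD k))
      omega
  · obtain ⟨c₁, c₂⟩ := c
    obtain ⟨rfl, hc⟩ := mem_rowD.mp hc
    exact mem_iff_lt_rowLen.mpr (by simp only at hc; omega)

lemma card_rowD (k : ℕ) : (rowD k).card = k := by
  rw [card_eq_sum_colLen _ (t := k) (by simp [colLen_rowD]),
    Finset.sum_congr rfl fun j hj => by rw [colLen_rowD, if_pos (Finset.mem_range.mp hj)]]
  simp

def borderedColLens (μ : YoungDiagram) (p : ℤ) : ℕ → ℤ
  | 0 => p
  | j + 1 => μ.colLen j

lemma borderedColLens_of_pos (μ : YoungDiagram) (p : ℤ) {j : ℕ} (hj : 0 < j) :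
    borderedColLens μ p j = μ.colLen (j - 1) := by
  obtain ⟨k, rfl⟩ := Nat.exists_eq_add_of_lt hj
  rfl

lemma sum_borderedColLens (μ : YoungDiagram) (p : ℤ) :
    ∑ j : Fin (μ.card + 2), borderedColLens μ p j = p + μ.card := by
  conv_rhs => rw [μ.card_eq_sum_colLen (t := μ.card + 1)
    (colLen_eq_zero_of_rowLen_le (by have := rowLen_zero_le_card μ; omega)), Nat.cast_sum,
    ← Fin.sum_univ_eq_sum_range fun j => (μ.colLen j : ℤ)]
  simp [Fin.sum_univ_succ, borderedColLens]

lemma aitkenMatrix_borderedColLens_submatrix (μ : YoungDiagram) (p : ℤ) (t : ℕ)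
    (k : Fin (t + 1)) :
    (aitkenMatrix (t + 1) (borderedColLens μ p) 0).submatrix Fin.succ k.succAbove =
      aitkenMatrix t (fun j => (μ.colLen j : ℤ)) fun j => ((rowD k).colLen j : ℤ) := by
  ext j k'
  simp only [submatrix_apply, aitkenMatrix_apply, Fin.val_succ, borderedColLens,
    Pi.zero_apply, sub_zero, colLen_rowD]
  congr 1
  rcases lt_or_ge (k' : ℕ) k with h | h
  · rw [Fin.succAbove_of_castSucc_lt _ _ (by simpa [Fin.lt_def] using h)]
    simp only [Nat.cast_add, Nat.cast_one, Fin.val_castSucc, h, if_true]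
    ring
  · rw [Fin.succAbove_of_le_castSucc _ _ (by simpa [Fin.le_def] using h)]
    simp only [Nat.cast_add, Nat.cast_one, Fin.val_succ, show ¬(k' : ℕ) < k by omega, if_false,
      Nat.cast_zero, sub_zero]
    ring

lemma det_aitkenMatrix_borderedColLens (μ : YoungDiagram) (p : ℤ) (t : ℕ) :
    (aitkenMatrix (t + 1) (borderedColLens μ p) 0).det =
      ∑ k : Fin (t + 1), (-1) ^ (k : ℕ) * invFact (p + k) *
        (aitkenMatrix t (fun j => (μ.colLen j : ℤ)) fun j => ((rowD k).colLen j : ℤ)).det := by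
  rw [det_succ_row_zero]
  simp [aitkenMatrix_borderedColLens_submatrix, borderedColLens]

lemma zchoose_mul_factorial (p : ℤ) {n i : ℕ} (hi : i ≤ n) :
    (zchoose (p + n) (p + i) : ℚ) * (n - i).factorial =
      (p + n).toNat.factorial * invFact (p + i) := by
  rcases lt_or_ge (p + i) 0 with hp | hp
  · simp [zchoose, invFact_of_neg hp, show ¬ 0 ≤ p + i by omega]
  obtain ⟨K, hK⟩ : ∃ K : ℕ, p + i = K := ⟨(p + i).toNat, by omega⟩
  have hN : (p + n).toNat = K + (n - i) := by omega
  have hchoose := Nat.choose_mul_factorial_mul_factorial (Nat.le_add_right K (n - i))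
  rw [Nat.add_sub_cancel_left] at hchoose
  rw [hK, invFact_natCast, hN, ← hchoose, zchoose, if_pos (by omega), hN]
  have : (K.factorial : ℚ) ≠ 0 := by positivity
  simp only [Int.toNat_natCast]
  push_cast
  field_simp

lemma zchoose_mul_sytSkew_rowD (μ : YoungDiagram) (p : ℤ) (i : ℕ) :
    (zchoose (p + μ.card) (p + i) * sytSkew μ (rowD i) : ℚ) =
      (p + μ.card).toNat.factorial * invFact (p + i) *
        (aitkenMatrix (μ.card + 1) (fun j => (μ.colLen j : ℤ))
          fun j => ((rowD i).colLen j : ℤ)).det := by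
  have hwidth := rowLen_zero_le_card μ
  by_cases hi : i ≤ μ.rowLen 0
  · have hle := rowD_le_iff.mpr hi
    rw [sytSkew, if_pos hle, sytCountCells_sdiff_eq_factorial_mul_det hle
      (t := μ.card + 1) (colLen_eq_zero_of_rowLen_le (by omega)), card_rowD, ← mul_assoc,
      zchoose_mul_factorial p (hi.trans hwidth)]
  · rw [sytSkew, if_neg (mt rowD_le_iff.mp hi), det_aitkenMatrix_eq_zero (antitone_colLen _)
      (antitone_colLen _) ⟨μ.rowLen 0, by omega⟩]
    · simp
    · simp [colLen_eq_zero_of_rowLen_le le_rfl, colLen_rowD, show μ.rowLen 0 < i by omega]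

theorem sum_zchoose_mul_sytSkew_eq (μ : YoungDiagram) (p : ℤ) :
    ((∑ i ∈ Finset.range (μ.card + 1),
        (-1) ^ i * zchoose (p + μ.card) (p + i) * (sytSkew μ (rowD i) : ℤ) : ℤ) : ℚ) =
      (p + μ.card).toNat.factorial * (aitkenMatrix (μ.card + 2) (borderedColLens μ p) 0).det := by
  set n := μ.card
  set A : ℕ → ℚ := fun i => (aitkenMatrix (n + 1) (fun j => (μ.colLen j : ℤ))
    fun j => ((rowD i).colLen j : ℤ)).det
  have hlast : sytSkew μ (rowD (n + 1)) = 0 :=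
    if_neg (mt rowD_le_iff.mp (by have := rowLen_zero_le_card μ; omega))
  calc _ = ∑ i ∈ Finset.range (n + 2),
        (-1) ^ i * (zchoose (p + n) (p + i) * sytSkew μ (rowD i) : ℚ) := by
        rw [Finset.sum_range_succ _ (n + 1), hlast]
        push_cast
        simp only [mul_assoc, mul_zero, add_zero]
    _ = ∑ i ∈ Finset.range (n + 2),
        (p + n).toNat.factorial * ((-1) ^ i * invFact (p + i) * A i) := by
        refine Finset.sum_congr rfl fun i _ => ?_
        rw [zchoose_mul_sytSkew_rowD]
        ring
    _ = _ := by
        rw [det_aitkenMatrix_borderedColLens, ← Finset.mul_sum,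
          Fin.sum_univ_eq_sum_range (fun i => (-1) ^ i * invFact (p + i) * A i)]

theorem sytCountCells_eq_factorial_mul_sign_mul_det {ν : YoungDiagram} {t : ℕ}
    (ht : ν.colLen t = 0) {w : ℕ → ℤ} (σ : Equiv.Perm (Fin t))
    (hσ : ∀ j : Fin t, (ν.colLen j : ℤ) - j = w (σ j) - σ j) :
    (sytCountCells ν.cells : ℚ) =
      (∑ j : Fin t, w j).toNat.factorial * Equiv.Perm.sign σ * (aitkenMatrix t w 0).det := by
  have hmatrix : (aitkenMatrix t (fun j => (ν.colLen j : ℤ)) fun _ => 0) =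
      (aitkenMatrix t w 0).submatrix σ id := by
    ext j k
    simp only [aitkenMatrix_apply, submatrix_apply, id, Pi.zero_apply]
    rw [hσ]
  have hcard : (ν.card : ℤ) = ∑ j : Fin t, w j := by
    have hshift := Equiv.sum_comp σ fun j : Fin t => w j - j
    simp only [← hσ, Finset.sum_sub_distrib, sub_left_inj] at hshift
    rw [ν.card_eq_sum_colLen ht, ← hshift, ← Fin.sum_univ_eq_sum_range]
    push_cast
    rfl
  have h := sytCountCells_sdiff_eq_factorial_mul_det (bot_le (a := ν)) ht
  simp only [cells_bot, Finset.sdiff_empty, colLen_bot, Nat.cast_zero] at h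
  rw [h, ← hcard, Int.toNat_natCast, show (⊥ : YoungDiagram).card = 0 from rfl, Nat.sub_zero,
    hmatrix, det_permute]
  ring

section ShiftedShape

variable {μ : YoungDiagram} {p : ℤ} {a : ℕ} {κ : ℕ → ℤ}

lemma bounds_of_eq_sInf (hp : 0 ≤ p + μ.card)
    (ha : a = sInf {i : ℕ | 1 ≤ i ∧ (μ.colLen (i - 1) : ℤ) - i ≤ p}) :
    1 ≤ a ∧ a ≤ μ.card + 1 ∧ (μ.colLen (a - 1) : ℤ) - a ≤ p ∧
      ∀ i, 1 ≤ i → i < a → p < (μ.colLen (i - 1) : ℤ) - i := by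
  have hmem : μ.card + 1 ∈ {i : ℕ | 1 ≤ i ∧ (μ.colLen (i - 1) : ℤ) - i ≤ p} := by
    refine ⟨by omega, ?_⟩
    rw [Nat.add_sub_cancel, colLen_eq_zero_of_rowLen_le (rowLen_zero_le_card μ)]
    omega
  obtain ⟨ha₁, haP⟩ : a ∈ {i : ℕ | 1 ≤ i ∧ (μ.colLen (i - 1) : ℤ) - i ≤ p} :=
    ha ▸ Nat.sInf_mem ⟨_, hmem⟩
  refine ⟨ha₁, ha ▸ Nat.sInf_le hmem, haP, fun i hi hia => ?_⟩
  by_contra! h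
  have : a ≤ i := ha ▸ Nat.sInf_le ⟨hi, h⟩
  omega

variable (hκ : ∀ i : ℕ, 1 ≤ i → κ i =
      if i < a then (μ.colLen (i - 1) : ℤ) - 1
      else if i = a then p + a - 1
      else (μ.colLen (i - 2) : ℤ))
include hκ

lemma kappa_succ (j : ℕ) : κ (j + 1) =
    if j + 1 < a then (μ.colLen j : ℤ) - 1 else if j + 1 = a then p + a - 1
    else (μ.colLen (j - 1) : ℤ) := by
  rw [hκ _ (by omega), Nat.add_sub_cancel, show j + 1 - 2 = j - 1 by omega]

lemma kappa_sub_eq_borderedColLens_cycleRange (ha₁ : 1 ≤ a) (han : a ≤ μ.card + 1)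
    (j : Fin (μ.card + 2)) :
    κ (j + 1) - j = borderedColLens μ p (Fin.cycleRange ⟨a - 1, by omega⟩ j) -
      (Fin.cycleRange ⟨a - 1, by omega⟩ j : ℕ) := by
  rw [kappa_succ hκ]
  rcases lt_trichotomy j ⟨a - 1, by omega⟩ with h | rfl | h
  · have h' : (j : ℕ) < a - 1 := h
    rw [Fin.cycleRange_of_lt h, Fin.val_add_one_of_lt (h.trans_le (Fin.le_last _)),
      borderedColLens_of_pos _ _ (by omega), if_pos (by omega)]
    simp only [Nat.add_sub_cancel]
    push_cast
    ring
  · rw [Fin.cycleRange_self, if_neg (by simp; omega), if_pos (by simp; omega)]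
    simp only [Fin.val_zero, borderedColLens]
    push_cast
    omega
  · have h' : a - 1 < (j : ℕ) := h
    rw [Fin.cycleRange_of_gt h, borderedColLens_of_pos _ _ (by omega), if_neg (by omega),
      if_neg (by omega)]

lemma exists_colLen_eq_kappa (ha₁ : 1 ≤ a)
    (hmin : ∀ i, 1 ≤ i → i < a → p < (μ.colLen (i - 1) : ℤ) - i)
    (hlt : (μ.colLen (a - 1) : ℤ) - a < p) :
    ∃ ν : YoungDiagram, ∀ i, 1 ≤ i → (ν.colLen (i - 1) : ℤ) = κ i := by
  have hanti : Antitone fun j => κ (j + 1) := antitone_nat_of_succ_le fun j => by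
    have := μ.colLen_anti j (j + 1) (Nat.le_succ j)
    have := μ.colLen_anti (j - 1) j (Nat.sub_le j 1)
    have : j + 2 = a → p < (μ.colLen j : ℤ) - (j + 1) := fun h => by
      simpa using hmin (j + 1) (by omega) (by omega)
    have : j + 1 = a → (μ.colLen j : ℤ) - a < p := fun h => by subst h; simpa using hlt
    simp only [kappa_succ hκ, Nat.add_sub_cancel]
    split_ifs <;> omega
  have hnonneg (j : ℕ) : 0 ≤ κ (j + 1) := by
    refine le_trans ?_ (hanti (Nat.le_add_right j (a + 1)))
    show 0 ≤ κ (j + (a + 1) + 1)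
    rw [kappa_succ hκ, if_neg (by omega), if_neg (by omega)]
    exact Int.natCast_nonneg _
  obtain ⟨ν, hν⟩ := exists_colLen_eq (f := fun j => (κ (j + 1)).toNat)
    (fun _ _ h => Int.toNat_le_toNat (hanti h)) (N := μ.card + a + 1) (by
      rw [kappa_succ hκ, if_neg (by omega), if_neg (by omega),
        colLen_eq_zero_of_rowLen_le (by have := rowLen_zero_le_card μ; omega)]
      rfl)
  refine ⟨ν, fun i hi => ?_⟩
  rw [hν, Nat.sub_add_cancel hi]
  exact Int.toNat_of_nonneg (Nat.sub_add_cancel hi ▸ hnonneg (i - 1))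

theorem sign_mul_sytCountCells_eq (ha₁ : 1 ≤ a) (han : a ≤ μ.card + 1) {ν : YoungDiagram}
    (hν : ∀ i, 1 ≤ i → (ν.colLen (i - 1) : ℤ) = κ i) :
    ((-1) ^ (a + 1) * sytCountCells ν.cells : ℚ) =
      (p + μ.card).toNat.factorial * (aitkenMatrix (μ.card + 2) (borderedColLens μ p) 0).det := by
  have hcol (j : ℕ) : (ν.colLen j : ℤ) = κ (j + 1) := by simpa using hν (j + 1)
  have hν₀ : ν.colLen (μ.card + 2) = 0 := by
    have := hcol (μ.card + 2)
    rw [kappa_succ hκ, if_neg (by omega), if_neg (by omega),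
      colLen_eq_zero_of_rowLen_le (μ := μ) (by have := rowLen_zero_le_card μ; omega)] at this
    exact_mod_cast this
  have hsign : (-1 : ℚ) ^ (a + 1) * (-1) ^ (a - 1) = 1 := by
    rw [← pow_add, show a + 1 + (a - 1) = 2 * a by omega, pow_mul]
    norm_num
  rw [sytCountCells_eq_factorial_mul_sign_mul_det hν₀ _ fun j =>
      (hcol j).symm ▸ kappa_sub_eq_borderedColLens_cycleRange hκ ha₁ han j,
    sum_borderedColLens, Fin.sign_cycleRange]
  push_cast
  linear_combination ((p + μ.card).toNat.factorial *
    (aitkenMatrix (μ.card + 2) (borderedColLens μ p) 0).det) * hsign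

end ShiftedShape

lemma det_aitkenMatrix_borderedColLens_eq_zero {μ : YoungDiagram} {p : ℤ} {a : ℕ} (ha₁ : 1 ≤ a)
    (han : a ≤ μ.card + 1) (hp : p = (μ.colLen (a - 1) : ℤ) - a) :
    (aitkenMatrix (μ.card + 2) (borderedColLens μ p) 0).det = 0 := by
  refine det_zero_of_row_eq (i := 0) (j := ⟨a, by omega⟩) (by simp [Fin.ext_iff]; omega)
    (funext fun k => ?_)
  show invFact (borderedColLens μ p 0 - 0 + k - 0) = invFact (borderedColLens μ p a - a + k - 0)
  rw [borderedColLens_of_pos μ p ha₁, borderedColLens, hp]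
  ring_nf

/-- binomial–SYT identity: fix a partition `μ` and `p ∈ ℤ` with
`p + |μ| ≥ 0`; let `a = min{i ≥ 1 : p ≥ μ'_i - i}` and let `κ` record the (1-indexed)
column lengths of the shape `μ^{(p)}`: `κ i = μ'_i - 1` for `i < a`, `= p + a - 1` for
`i = a`, and `= μ'_{i-1}` for `i > a`. Then
`(-1)^{a+1} f^{μ^{(p)}} = ∑_{i=0}^{|μ|} (-1)^i C(p+|μ|, p+i) f^{μ/(i)}`:
if some Young diagram `ν` has column lengths `κ`, then `(-1)^{a+1} f^ν` equals the
alternating sum, and if no Young diagram has column lengths `κ` (i.e. `μ^{(p)}` is not a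
valid shape, so `f^{μ^{(p)}} = 0` by convention) the alternating sum vanishes. -/
theorem binomial_syt_identity (mu : YoungDiagram) (p : ℤ) (hp : 0 ≤ p + mu.card)
    (a : ℕ) (ha : a = sInf {i : ℕ | 1 ≤ i ∧ (mu.colLen (i - 1) : ℤ) - i ≤ p})
    (kappa : ℕ → ℤ)
    (hkappa : ∀ i : ℕ, 1 ≤ i → kappa i =
      if i < a then (mu.colLen (i - 1) : ℤ) - 1
      else if i = a then p + a - 1
      else (mu.colLen (i - 2) : ℤ)) :
    (∀ nu : YoungDiagram, (∀ i : ℕ, 1 ≤ i → (nu.colLen (i - 1) : ℤ) = kappa i) →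
      (-1 : ℤ) ^ (a + 1) * (sytCountCells nu.cells : ℤ) =
        ∑ i ∈ Finset.range (mu.card + 1),
          (-1 : ℤ) ^ i * zchoose (p + mu.card) (p + i) * (sytSkew mu (rowD i) : ℤ)) ∧
    ((¬ ∃ nu : YoungDiagram, ∀ i : ℕ, 1 ≤ i → (nu.colLen (i - 1) : ℤ) = kappa i) →
      (∑ i ∈ Finset.range (mu.card + 1),
          (-1 : ℤ) ^ i * zchoose (p + mu.card) (p + i) * (sytSkew mu (rowD i) : ℤ)) = 0) := by
  obtain ⟨ha₁, han, haP, hmin⟩ := bounds_of_eq_sInf hp ha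
  have hsum := sum_zchoose_mul_sytSkew_eq mu p
  refine ⟨fun nu hnu => ?_, fun hno => ?_⟩
  · have := sign_mul_sytCountCells_eq hkappa ha₁ han hnu
    rw [← hsum] at this
    exact_mod_cast this
  · have hp_eq : p = (mu.colLen (a - 1) : ℤ) - a := by
      by_contra hne
      exact hno (exists_colLen_eq_kappa hkappa ha₁ hmin (lt_of_le_of_ne haP (Ne.symm hne)))
    rw [det_aitkenMatrix_borderedColLens_eq_zero ha₁ han hp_eq, mul_zero] at hsum
    exact_mod_cast hsum
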